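/- arXiv:math/9905119 — 2 statements merged into one kernel-verified Lean document; each statement's English description precedes it below -/
import Mathlib

section
/- Every non-principal ultrafilter on ℕ is non-meager as a subset of Cantor space; consequently, for every non-principal ultrafilter U, player ONE does not have a winning strategy in the game G1(U), and since TWO also has no winning strategy, G1(U) is undetermined. -/
open Filter Set

/-- A strategy: maps finite sequences of the opponent's moves to a natural number. -/
abbrev Strat := List ℕ → ℕ

/-- TWO's move in inning `k` (0-indexed) when following strategy `σ` against ONE's
moves `m`: TWO has seen `m 0, …, m k`. -/
def twoFollow (σ : Strat) (m : ℕ → ℕ) (k : ℕ) : ℕ :=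
  σ (List.ofFn fun i : Fin (k + 1) => m i)

/-- ONE's move in inning `k` when following strategy `σ` against TWO's moves `n`:
ONE's move depends on `n 0, …, n (k-1)` (the first move is `σ []`). -/
def oneFollow (σ : Strat) (n : ℕ → ℕ) (k : ℕ) : ℕ :=
  σ (List.ofFn fun i : Fin k => n i)

/-- TWO wins the play `(m 0, n 0, m 1, n 1, …)` of the game `G1(F)`. -/
def TwoWins1 (F : Set (Set ℕ)) (m n : ℕ → ℕ) : Prop :=
  StrictMono n ∧ (∀ N : ℕ, ∃ k, N ≤ k ∧ m k < n k) ∧ Set.range n ∈ F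

/-- TWO wins the play `(m 0, n 0, m 1, n 1, …)` of the game `G2(F)`. -/
def TwoWins2 (F : Set (Set ℕ)) (m n : ℕ → ℕ) : Prop :=
  (∀ᶠ k in Filter.atTop, m k < n k) ∧ Set.range n ∈ F

/-- `σ` is a winning strategy for TWO in `G1(F)`. -/
def TwoWinning1 (F : Set (Set ℕ)) (σ : Strat) : Prop :=
  ∀ m : ℕ → ℕ, TwoWins1 F m (twoFollow σ m)

/-- `σ` is a winning strategy for ONE in `G1(F)`. -/
def OneWinning1 (F : Set (Set ℕ)) (σ : Strat) : Prop :=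
  ∀ n : ℕ → ℕ, ¬ TwoWins1 F (oneFollow σ n) n

/-- `σ` is a winning strategy for TWO in `G2(F)`. -/
def TwoWinning2 (F : Set (Set ℕ)) (σ : Strat) : Prop :=
  ∀ m : ℕ → ℕ, TwoWins2 F m (twoFollow σ m)

/-- `σ` is a winning strategy for ONE in `G2(F)`. -/
def OneWinning2 (F : Set (Set ℕ)) (σ : Strat) : Prop :=
  ∀ n : ℕ → ℕ, ¬ TwoWins2 F (oneFollow σ n) n

/-- `F` is a non-principal filter on `ℕ`: upward closed, closed under finite
intersections, and every member is infinite. -/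
def IsNPFilter (F : Set (Set ℕ)) : Prop :=
  (∀ X ∈ F, ∀ Y : Set ℕ, X ⊆ Y → Y ∈ F) ∧
  (∀ X ∈ F, ∀ Y ∈ F, X ∩ Y ∈ F) ∧
  (∀ X ∈ F, X.Infinite)

/-- `F` is a rare filter: every partition of `ℕ` into disjoint (nonempty) finite sets
admits a selector in `F`. -/
def IsRare (F : Set (Set ℕ)) : Prop :=
  ∀ I : ℕ → Set ℕ, (∀ n, (I n).Finite) → (∀ n, (I n).Nonempty) →
    (Pairwise fun i j => Disjoint (I i) (I j)) → (⋃ n, I n) = Set.univ →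
    ∃ X ∈ F, ∀ n, (X ∩ I n).Subsingleton

/-- The subset of Cantor space `2^ℕ` corresponding to the filter `F`. -/
def cantorCoded (F : Set (Set ℕ)) : Set (ℕ → Bool) :=
  {χ | {n | χ n = true} ∈ F}

/-- The increasing enumeration of `X ⊆ ℕ`. -/
noncomputable def enum (X : Set ℕ) : ℕ → ℕ := Nat.nth (· ∈ X)

/-- `g` eventually dominates `f`. -/
def EvDom (g f : ℕ → ℕ) : Prop := ∀ᶠ k in Filter.atTop, f k < g k

/-!
Flipping every bit is a homeomorphism of `2^ℕ` that maps an ultrafilter onto its complement, so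
by the Baire category theorem the ultrafilter is not meagre.

Against a strategy of ONE, cut `ℕ` into blocks so long that ONE's reply to increasing moves below
a block lies below the block's end. Sets meeting almost every block form a meagre family, so a
non-meagre filter has a member `X` missing infinitely many blocks; TWO enumerates `X` and beats
ONE right after each missed block.

Against a winning strategy of TWO, call a position wide if ONE can make TWO's next response
arbitrarily large. At any other position ONE can play a bound for TWO's reply, and such moves
alone would never be beaten, so they lead to a wide position. ONE runs two plays in alternation,
each time jumping above every response seen so far and then walking to a wide position. Apart
from the common start, the responses of the two plays lie in disjoint intervals, so their
ranges cannot both belong to a filter whose members are infinite.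
-/

theorem not_isMeagre_of_preimage_eq_compl {X : Type*} [TopologicalSpace X] [BaireSpace X]
    [Nonempty X] (e : X ≃ₜ X) {s : Set X} (hs : e ⁻¹' s = sᶜ) : ¬ IsMeagre s := fun h =>
  not_isMeagre_of_isOpen isOpen_univ univ_nonempty <| by
    simpa [hs] using h.union (h.preimage_of_isOpenMap e.continuous e.isOpenMap)

def cantorNot : (ℕ → Bool) ≃ₜ (ℕ → Bool) :=
  Homeomorph.piCongrRight fun _ => Equiv.boolNot.toHomeomorphOfDiscrete

section Ultrafilter

variable {U : Set (Set ℕ)}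

theorem IsNPFilter.compl_mem_iff_notMem (hU : IsNPFilter U)
    (hultra : ∀ X : Set ℕ, X ∈ U ∨ Xᶜ ∈ U) {X : Set ℕ} : Xᶜ ∈ U ↔ X ∉ U := by
  refine ⟨fun hc hX => ?_, (hultra X).resolve_left⟩
  simpa using hU.2.2 _ (hU.2.1 _ hX _ hc)

theorem preimage_cantorNot_cantorCoded (hU : IsNPFilter U)
    (hultra : ∀ X : Set ℕ, X ∈ U ∨ Xᶜ ∈ U) :
    cantorNot ⁻¹' cantorCoded U = (cantorCoded U)ᶜ := by
  ext χ
  have hflip : {n | (cantorNot χ) n = true} = {n | χ n = true}ᶜ := by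
    ext n
    simp [cantorNot, Equiv.boolNot, Equiv.toHomeomorphOfDiscrete]
  simp only [mem_preimage, cantorCoded, mem_ofPred_eq, mem_compl_iff, hflip]
  exact hU.compl_mem_iff_notMem hultra

theorem not_isMeagre_cantorCoded (hU : IsNPFilter U)
    (hultra : ∀ X : Set ℕ, X ∈ U ∨ Xᶜ ∈ U) : ¬ IsMeagre (cantorCoded U) :=
  not_isMeagre_of_preimage_eq_compl cantorNot (preimage_cantorNot_cantorCoded hU hultra)

end Ultrafilter

theorem isMeagre_setOf_eventually_exists_mem (I : ℕ → Finset ℕ)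
    (hI : ∀ i, ∀ᶠ j in atTop, i ∉ I j) :
    IsMeagre {χ : ℕ → Bool | ∀ᶠ j in atTop, ∃ i ∈ I j, χ i = true} := by
  set C : ℕ → Set (ℕ → Bool) := fun N => {χ | ∀ j ≥ N, ∃ i ∈ I j, χ i = true}
  have hclosed (N : ℕ) : IsClosed (C N) := by
    have hC : C N = ⋂ j ≥ N, ⋃ i ∈ (I j : Set ℕ), {χ | χ i = true} := by
      ext χ
      simp [C]
    rw [hC]
    refine isClosed_biInter fun j _ => (I j).finite_toSet.isClosed_biUnion fun i _ => ?_
    exact isClosed_eq (continuous_apply i) continuous_const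
  -- erasing `χ` on `I j` for large `j` approximates `χ` from outside `C N`
  have hdense (N : ℕ) : Dense (C N)ᶜ := fun χ => by
    refine mem_closure_of_tendsto (b := atTop) (f := fun j i => χ i && decide (i ∉ I j)) ?_ ?_
    · refine tendsto_pi_nhds.2 fun i => tendsto_nhds_of_eventually_eq ?_
      filter_upwards [hI i] with j hj
      simp [hj]
    · filter_upwards [eventually_ge_atTop N] with j hj hjC
      obtain ⟨i, hi, hχi⟩ := hjC j hj
      simp [hi] at hχi
  have hunion :
      {χ : ℕ → Bool | ∀ᶠ j in atTop, ∃ i ∈ I j, χ i = true} = ⋃ N, C N := by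
    ext χ
    simp [C, eventually_atTop]
  rw [hunion]
  exact isMeagre_iUnion fun N => IsNowhereDense.isMeagre <|
    (hclosed N).isNowhereDense_iff.2 (interior_eq_empty_iff_dense_compl.2 (hdense N))

def stratBound (σ : Strat) (b : ℕ) : ℕ := (List.range b).sublists.toFinset.sup σ

theorem le_stratBound (σ : Strat) {b : ℕ} {l : List ℕ} (hl : l.Pairwise (· < ·))
    (hb : ∀ x ∈ l, x < b) : σ l ≤ stratBound σ b := by
  have hsub : l.Sublist (List.range b) :=
    List.sublist_of_subperm_of_pairwise
      ((show l.Nodup from hl.imp ne_of_lt).subperm fun x hx => List.mem_range.2 (hb x hx))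
      hl List.pairwise_lt_range
  exact Finset.le_sup (List.mem_toFinset.2 (List.mem_sublists.2 hsub))

/-- Block `j` is `[blockEnds σ j, blockEnds σ (j + 1))`; ONE's reply to increasing moves below
a block lies below its end. -/
def blockEnds (σ : Strat) : ℕ → ℕ
  | 0 => 0
  | j + 1 => blockEnds σ j + stratBound σ (blockEnds σ j) + 1

theorem blockEnds_strictMono (σ : Strat) : StrictMono (blockEnds σ) :=
  strictMono_nat_of_lt_succ fun j => by simp only [blockEnds]; omega

theorem stratBound_lt_blockEnds (σ : Strat) (j : ℕ) :
    stratBound σ (blockEnds σ j) < blockEnds σ (j + 1) := by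
  simp only [blockEnds]; omega

/-- TWO's move right after a block missed by `X` beats ONE's reply. -/
theorem exists_ge_oneFollow_enum_lt (σ : Strat) {X : Set ℕ} (hX : X.Infinite)
    (hgap : ∃ᶠ j in atTop, ∀ i ∈ Ico (blockEnds σ j) (blockEnds σ (j + 1)), i ∉ X) :
    ∀ N, ∃ k, N ≤ k ∧ oneFollow σ (enum X) k < enum X k := by
  classical
  intro N
  obtain ⟨j, hj, hjX⟩ := frequently_atTop.1 hgap (enum X N + 1)
  set b := blockEnds σ j
  set c := Nat.count (· ∈ X) b
  have hlt (i : ℕ) : i < c ↔ enum X i < b := Nat.lt_nth_iff_count_lt (p := (· ∈ X)) hX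
  have hNb : enum X N < b := by have := (blockEnds_strictMono σ).le_apply (x := j); omega
  refine ⟨c, ((hlt N).2 hNb).le, ?_⟩
  have hσ : oneFollow σ (enum X) c < blockEnds σ (j + 1) :=
    (le_stratBound σ (List.pairwise_ofFn.2 fun _ _ h => Nat.nth_strictMono hX h)
      (by simp only [List.mem_ofFn]; rintro _ ⟨i, rfl⟩; exact (hlt i).1 i.2)).trans_lt
      (stratBound_lt_blockEnds σ j)
  have hbc : b ≤ enum X c := (Nat.count_le_iff_le_nth (p := (· ∈ X)) hX).1 le_rfl
  exact hσ.trans_le (not_lt.1 fun h => hjX _ ⟨hbc, h⟩ (Nat.nth_mem_of_infinite hX c))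

theorem not_oneWinning1_of_not_isMeagre {F : Set (Set ℕ)} (hinf : ∀ X ∈ F, X.Infinite)
    (hF : ¬ IsMeagre (cantorCoded F)) (σ : Strat) : ¬ OneWinning1 F σ := by
  obtain ⟨X, hXF, hgap⟩ : ∃ X ∈ F,
      ∃ᶠ j in atTop, ∀ i ∈ Ico (blockEnds σ j) (blockEnds σ (j + 1)), i ∉ X := by
    by_contra! h
    refine hF ((isMeagre_setOf_eventually_exists_mem
      (fun j => Finset.Ico (blockEnds σ j) (blockEnds σ (j + 1))) fun i => ?_).mono
        fun χ hχ => ?_)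
    · filter_upwards [eventually_gt_atTop i] with j hj
      have := (blockEnds_strictMono σ).le_apply (x := j)
      simp only [Finset.mem_Ico, not_and, not_lt]
      omega
    · filter_upwards [h _ hχ] with j ⟨i, hi, hiχ⟩
      exact ⟨i, by simpa using hi, hiχ⟩
  intro hσ
  refine hσ (enum X)
    ⟨Nat.nth_strictMono (hinf X hXF), exists_ge_oneFollow_enum_lt σ (hinf X hXF) hgap, ?_⟩
  rw [enum, Nat.range_nth_of_infinite (p := (· ∈ X)) (hinf X hXF)]
  exact hXF

section InitialSegments

variable {α : Type*}

def initSeg (m : ℕ → α) (k : ℕ) : List α := List.ofFn fun i : Fin k => m i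

@[simp]
theorem length_initSeg (m : ℕ → α) (k : ℕ) : (initSeg m k).length = k := List.length_ofFn

theorem initSeg_succ (m : ℕ → α) (k : ℕ) : initSeg m (k + 1) = initSeg m k ++ [m k] := by
  rw [initSeg, List.ofFn_succ', List.concat_eq_append]
  rfl

theorem initSeg_prefix_initSeg (m : ℕ → α) {k l : ℕ} (h : k ≤ l) :
    initSeg m k <+: initSeg m l :=
  List.prefix_iff_eq_take.2 <| List.ext_getElem (by simp [h]) fun i _ _ => by simp [initSeg]

theorem initSeg_getD {s l : List α} (d : α) (h : s <+: l) :
    initSeg (fun i => l.getD i d) s.length = s :=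
  List.ext_getElem (by simp) fun i _ hi => by
    simp [initSeg, List.getElem?_eq_getElem (hi.trans_le h.length_le), h.getElem hi]

theorem exists_initSeg_eq_of_prefix_chain [Inhabited α] {c : ℕ → List α}
    (hc : ∀ j, c j <+: c (j + 1)) (hlen : ∀ j, j ≤ (c j).length) :
    ∃ m : ℕ → α, ∀ j, initSeg m (c j).length = c j := by
  have hchain {j j' : ℕ} (h : j ≤ j') : c j <+: c j' :=
    Nat.rel_of_forall_rel_succ_of_le (· <+: ·) hc h
  refine ⟨fun i => (c (i + 1)).getD i default, fun j => List.ext_getElem (by simp) ?_⟩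
  intro i _ hi
  have hi' : i < (c (i + 1)).length := (hlen (i + 1)).trans_lt' i.lt_succ_self
  simp only [initSeg, List.getElem_ofFn, List.getD_eq_getElem _ _ hi']
  rcases le_total (i + 1) j with h | h
  · exact (hchain h).getElem hi'
  · exact ((hchain h).getElem hi).symm

theorem initSeg_prefix_or_exists {c : ℕ → List α} {m : ℕ → α}
    (hm : ∀ j, initSeg m (c j).length = c j) (L : ℕ) :
    ∀ j, L ≤ (c j).length →
      initSeg m L <+: c 0 ∨ ∃ i, (c i).length < L ∧ initSeg m L <+: c (i + 1)
  | 0, h => Or.inl (hm 0 ▸ initSeg_prefix_initSeg m h)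
  | j + 1, h => by
    by_cases h' : L ≤ (c j).length
    · exact initSeg_prefix_or_exists hm L j h'
    · exact Or.inr ⟨j, by omega, hm (j + 1) ▸ initSeg_prefix_initSeg m h⟩

end InitialSegments

section TwoStrategy

variable {F : Set (Set ℕ)} {σ : Strat} {s t : List ℕ}

theorem twoFollow_eq_initSeg (σ : Strat) (m : ℕ → ℕ) (k : ℕ) :
    twoFollow σ m k = σ (initSeg m (k + 1)) := rfl

theorem TwoWinning1.le_of_prefix (hσ : TwoWinning1 F σ) (hs : s ≠ []) (h : s <+: t) :
    σ s ≤ σ t := by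
  have hs' : 0 < s.length := List.length_pos_iff.2 hs
  have hst := h.length_le
  have hkl := (hσ fun i => t.getD i 0).1.monotone (show s.length - 1 ≤ t.length - 1 by omega)
  rwa [twoFollow_eq_initSeg, twoFollow_eq_initSeg, Nat.sub_add_cancel hs',
    Nat.sub_add_cancel (hs'.trans_le hst), initSeg_getD 0 h, initSeg_getD 0 List.prefix_rfl] at hkl

def IsWide (σ : Strat) (t : List ℕ) : Prop := ¬ BddAbove (range fun x => σ (t ++ [x]))

noncomputable def capMove (σ : Strat) (t : List ℕ) : ℕ := ⨆ x, σ (t ++ [x])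

theorem le_capMove (h : ¬ IsWide σ t) (x : ℕ) : σ (t ++ [x]) ≤ capMove σ t :=
  le_ciSup (not_not.1 h) x

noncomputable def capWalk (σ : Strat) (t : List ℕ) : ℕ → List ℕ
  | 0 => t
  | j + 1 => capWalk σ t j ++ [capMove σ (capWalk σ t j)]

@[simp]
theorem length_capWalk (σ : Strat) (t : List ℕ) (j : ℕ) :
    (capWalk σ t j).length = t.length + j := by
  induction j with
  | zero => rfl
  | succ j ih => simp [capWalk, ih, add_assoc]

theorem capWalk_prefix_succ (σ : Strat) (t : List ℕ) (j : ℕ) :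
    capWalk σ t j <+: capWalk σ t (j + 1) :=
  List.prefix_append _ _

/-- Along a walk through positions that are not wide, ONE's cap moves are never beaten. -/
theorem TwoWinning1.exists_isWide_capWalk (hσ : TwoWinning1 F σ) (t : List ℕ) :
    ∃ j, IsWide σ (capWalk σ t j) := by
  by_contra! h
  obtain ⟨m, hm⟩ := exists_initSeg_eq_of_prefix_chain (capWalk_prefix_succ σ t)
    fun j => by simp
  obtain ⟨k, hk, hbeat⟩ := (hσ m).2.1 t.length
  obtain ⟨j, rfl⟩ := Nat.exists_eq_add_of_le hk
  have hseg : initSeg m (t.length + j) ++ [m (t.length + j)] =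
      capWalk σ t j ++ [capMove σ (capWalk σ t j)] := by
    have := hm (j + 1)
    rwa [length_capWalk, ← add_assoc, initSeg_succ] at this
  have hmove := List.singleton_inj.1 (List.append_inj' hseg rfl).2
  rw [twoFollow_eq_initSeg, initSeg_succ, hseg, hmove] at hbeat
  exact (le_capMove (h j) _).not_gt hbeat

theorem IsWide.exists_lt (h : IsWide σ t) (τ : ℕ) : ∃ x, τ < σ (t ++ [x]) := by
  obtain ⟨_, ⟨x, rfl⟩, hx⟩ := not_bddAbove_iff.1 h τ
  exact ⟨x, hx⟩

noncomputable def jumpMove (σ : Strat) (t : List ℕ) (τ : ℕ) : ℕ :=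
  sInf {x | τ < σ (t ++ [x])}

theorem IsWide.lt_jumpMove (h : IsWide σ t) (τ : ℕ) : τ < σ (t ++ [jumpMove σ t τ]) :=
  Nat.sInf_mem (h.exists_lt τ)

noncomputable def nextWide (σ : Strat) (t : List ℕ) : List ℕ :=
  capWalk σ t (sInf {j | IsWide σ (capWalk σ t j)})

theorem TwoWinning1.isWide_nextWide (hσ : TwoWinning1 F σ) (t : List ℕ) :
    IsWide σ (nextWide σ t) :=
  Nat.sInf_mem (hσ.exists_isWide_capWalk t)

theorem prefix_nextWide (σ : Strat) (t : List ℕ) : t <+: nextWide σ t :=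
  Nat.rel_of_forall_rel_succ_of_le (· <+: ·) (capWalk_prefix_succ σ t) (Nat.zero_le _)

noncomputable def stage (σ : Strat) (t : List ℕ) (τ : ℕ) : List ℕ :=
  nextWide σ (t ++ [jumpMove σ t τ])

theorem prefix_stage (σ : Strat) (t : List ℕ) (τ : ℕ) : t <+: stage σ t τ :=
  (List.prefix_append _ _).trans (prefix_nextWide σ _)

theorem length_lt_length_stage (σ : Strat) (t : List ℕ) (τ : ℕ) :
    t.length < (stage σ t τ).length := by
  simpa [stage] using (prefix_nextWide σ (t ++ [jumpMove σ t τ])).length_le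

theorem TwoWinning1.lt_of_prefix_stage (hσ : TwoWinning1 F σ) (ht : IsWide σ t) {τ : ℕ}
    (hs : s <+: stage σ t τ) (hlen : t.length < s.length) : τ < σ s :=
  (ht.lt_jumpMove τ).trans_le <| hσ.le_of_prefix (by simp) <|
    List.prefix_of_prefix_length_le (prefix_nextWide σ _) hs (by simpa using hlen)

def respBound (σ : Strat) (l : List ℕ) : ℕ := l.inits.toFinset.sup σ

theorem le_respBound (σ : Strat) (h : s <+: t) : σ s ≤ respBound σ t :=
  Finset.le_sup (by simpa using h)

theorem respBound_mono (σ : Strat) (h : s <+: t) : respBound σ s ≤ respBound σ t :=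
  Finset.sup_mono fun _ hu => by simpa using (by simpa using hu : _ <+: s).trans h

/-- Positions of two plays built in alternation, `alternatingPlays σ n` belonging to play
`n % 2`: at each step the active play jumps above every response so far in either play. -/
noncomputable def alternatingPlays (σ : Strat) : ℕ → List ℕ
  | 0 => nextWide σ []
  | 1 => nextWide σ []
  | n + 2 => stage σ (alternatingPlays σ n)
      (max (respBound σ (alternatingPlays σ n)) (respBound σ (alternatingPlays σ (n + 1))))

noncomputable def threshold (σ : Strat) (n : ℕ) : ℕ :=
  max (respBound σ (alternatingPlays σ n)) (respBound σ (alternatingPlays σ (n + 1)))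

theorem alternatingPlays_add_two (σ : Strat) (n : ℕ) :
    alternatingPlays σ (n + 2) = stage σ (alternatingPlays σ n) (threshold σ n) := by
  rw [alternatingPlays, threshold]

theorem TwoWinning1.isWide_alternatingPlays (hσ : TwoWinning1 F σ) :
    ∀ n, IsWide σ (alternatingPlays σ n)
  | 0 | 1 => hσ.isWide_nextWide []
  | _ + 2 => hσ.isWide_nextWide _

theorem alternatingPlays_prefix (σ : Strat) (n : ℕ) :
    alternatingPlays σ n <+: alternatingPlays σ (n + 2) := by
  rw [alternatingPlays_add_two]
  exact prefix_stage σ _ _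

theorem le_length_alternatingPlays (σ : Strat) : ∀ n, n / 2 ≤ (alternatingPlays σ n).length
  | 0 | 1 => by omega
  | n + 2 => by
    have := le_length_alternatingPlays σ n
    have := length_lt_length_stage σ (alternatingPlays σ n) (threshold σ n)
    rw [alternatingPlays_add_two]
    omega

theorem threshold_mono (σ : Strat) : Monotone (threshold σ) :=
  monotone_nat_of_le_succ fun n =>
    max_le (le_max_of_le_right (respBound_mono σ (alternatingPlays_prefix σ n))) (le_max_left _ _)

def IsNewAt (σ : Strat) (n : ℕ) (s : List ℕ) : Prop :=
  s <+: alternatingPlays σ (n + 2) ∧ (alternatingPlays σ n).length < s.length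

theorem TwoWinning1.mem_Ioc_threshold (hσ : TwoWinning1 F σ) {n : ℕ} (hs : IsNewAt σ n s) :
    σ s ∈ Ioc (threshold σ n) (threshold σ (n + 1)) := by
  obtain ⟨hpre, hlen⟩ := hs
  refine ⟨?_, (le_respBound σ hpre).trans (le_max_right _ _)⟩
  rw [alternatingPlays_add_two] at hpre
  exact hσ.lt_of_prefix_stage (hσ.isWide_alternatingPlays n) hpre hlen

theorem TwoWinning1.apply_ne_of_isNewAt (hσ : TwoWinning1 F σ) {n n' : ℕ} {s' : List ℕ}
    (hs : IsNewAt σ n s) (hs' : IsNewAt σ n' s') (hnn' : n ≠ n') : σ s ≠ σ s' := by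
  have h := hσ.mem_Ioc_threshold hs
  have h' := hσ.mem_Ioc_threshold hs'
  rcases hnn'.lt_or_gt with hlt | hlt
  · exact (h.2.trans_lt ((threshold_mono σ hlt).trans_lt h'.1)).ne
  · exact (h'.2.trans_lt ((threshold_mono σ hlt).trans_lt h.1)).ne'

theorem exists_play_of_alternatingPlays (σ : Strat) (p : ℕ) (hp : p < 2) :
    ∃ m : ℕ → ℕ, ∀ v ∈ range (twoFollow σ m),
      v ∈ (nextWide σ []).inits.toFinset.image σ ∨
        ∃ j s, IsNewAt σ (2 * j + p) s ∧ σ s = v := by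
  obtain ⟨m, hm⟩ :=
    exists_initSeg_eq_of_prefix_chain (c := fun j => alternatingPlays σ (2 * j + p))
      (fun j => by simpa [mul_add, add_right_comm] using alternatingPlays_prefix σ (2 * j + p))
      (fun j => (le_length_alternatingPlays σ _).trans' (by omega))
  refine ⟨m, ?_⟩
  rintro _ ⟨k, rfl⟩
  rw [twoFollow_eq_initSeg]
  rcases initSeg_prefix_or_exists hm (k + 1) (k + 1)
    ((le_length_alternatingPlays σ _).trans' (by omega)) with h | ⟨j, hj, hjs⟩
  · refine Or.inl (Finset.mem_image.2 ⟨_, ?_, rfl⟩)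
    rw [List.mem_toFinset, List.mem_inits]
    interval_cases p <;> exact h
  · exact Or.inr ⟨j, initSeg m (k + 1),
      ⟨by simpa [mul_add, add_right_comm] using hjs, by simpa using hj⟩, rfl⟩

theorem not_twoWinning1 (hinter : ∀ X ∈ F, ∀ Y ∈ F, X ∩ Y ∈ F)
    (hinf : ∀ X ∈ F, X.Infinite) (σ : Strat) : ¬ TwoWinning1 F σ := by
  intro hσ
  obtain ⟨mA, hmA⟩ := exists_play_of_alternatingPlays σ 0 (by norm_num)
  obtain ⟨mB, hmB⟩ := exists_play_of_alternatingPlays σ 1 (by norm_num)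
  have hsub : range (twoFollow σ mA) ∩ range (twoFollow σ mB) ⊆
      (nextWide σ []).inits.toFinset.image σ := by
    rintro v ⟨hvA, hvB⟩
    rcases hmA v hvA with h | ⟨j, s, hs, rfl⟩
    · exact h
    rcases hmB _ hvB with h | ⟨j', s', hs', hss'⟩
    · exact h
    exact absurd hss'.symm (hσ.apply_ne_of_isNewAt hs hs' (by omega))
  exact hinf _ (hinter _ (hσ mA).2.2 _ (hσ mB).2.2) ((Finset.finite_toSet _).subset hsub)

end TwoStrategy

/-- Every non-principal ultrafilter is non-meager; consequently neither player has a
winning strategy in `G1(U)`, so the game is undetermined. -/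
theorem stmt17 (U : Set (Set ℕ)) (hU : IsNPFilter U)
    (hultra : ∀ X : Set ℕ, X ∈ U ∨ Xᶜ ∈ U) :
    ¬ IsMeagre (cantorCoded U) ∧ (¬ ∃ σ : Strat, OneWinning1 U σ) ∧
      (¬ ∃ σ : Strat, TwoWinning1 U σ) :=
  ⟨not_isMeagre_cantorCoded hU hultra,
    fun ⟨σ, hσ⟩ =>
      not_oneWinning1_of_not_isMeagre hU.2.2 (not_isMeagre_cantorCoded hU hultra) σ hσ,
    fun ⟨σ, hσ⟩ => not_twoWinning1 hU.2.1 hU.2.2 σ hσ⟩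
end

section
/- Let {I_n : n ∈ ℕ} be a partition of ℕ into disjoint finite sets, and define a 1-tactic F for ONE by: given TWO's last move k with k ∈ I_n, ONE plays F(k) = max(⋃_{j ≤ n+k} I_j) + n + k + 1. Then in any play (m_1, n_1, m_2, n_2, ...) with m_{k+1} = F(n_k), if m_k < n_k for all but finitely many k, then the set {n_k : k ∈ ℕ} meets all but finitely many blocks I_n in at most one point. -/
open Filter Set

/-!
Let `b k` be the index of the block containing `ν k`. Once `m (k + 1) < ν (k + 1)`, the move
`ν (k + 1)` exceeds `T (ν k)`, which bounds every block of index at most `b k + ν k`; hence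
`b (k + 1) > b k`. So `b` is eventually strictly increasing, and two distinct moves in one block
force one of them to come from the finitely many early innings.
-/

theorem le_of_sup_sup_range_lt {I : ℕ → Finset ℕ} {N n y : ℕ}
    (hy : (Finset.range N).sup (fun j => (I j).sup id) < y) (hyI : y ∈ I n) : N ≤ n := by
  by_contra! hn
  have hle : y ≤ (Finset.range N).sup (fun j => (I j).sup id) :=
    (Finset.le_sup (f := id) hyI).trans
      (Finset.le_sup (f := fun j => (I j).sup id) (Finset.mem_range.2 hn))
  exact hle.not_gt hy

theorem finite_setOf_not_subsingleton_range_inter {α ι : Type*} {I : ι → Set α}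
    (hdisj : Pairwise fun i j => Disjoint (I i) (I j)) {ν : ℕ → α} {b : ℕ → ι}
    (hb : ∀ k, ν k ∈ I (b k)) {K : ℕ} (hinj : InjOn b (Ici K)) :
    {i | ¬ (range ν ∩ I i).Subsingleton}.Finite := by
  refine ((finite_Iio K).image b).subset fun i hi => ?_
  obtain ⟨_, ⟨⟨k, rfl⟩, hk⟩, _, ⟨⟨k', rfl⟩, hk'⟩, hne⟩ := not_subsingleton_iff.1 hi
  have index_eq : ∀ {j}, ν j ∈ I i → b j = i := fun {j} hj => by
    by_contra h
    exact Set.disjoint_left.1 (hdisj h) (hb j) hj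
  by_contra hnot
  have index_mem_Ici : ∀ {j}, b j = i → j ∈ Ici K := fun {j} hj =>
    mem_Ici.2 (not_lt.1 fun hjK => hnot ⟨j, hjK, hj⟩)
  exact hne <| congrArg ν <|
    hinj (index_mem_Ici (index_eq hk)) (index_mem_Ici (index_eq hk'))
      ((index_eq hk).trans (index_eq hk').symm)

theorem stmt19_general (I : ℕ → Finset ℕ)
    (hdisj : Pairwise fun i j => Disjoint (I i) (I j))
    (hcover : ∀ k : ℕ, ∃ n, k ∈ I n)
    (T : ℕ → ℕ)
    (hT : ∀ k n : ℕ, k ∈ I n →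
      T k = (Finset.range (n + k + 1)).sup (fun j => (I j).sup id) + n + k + 1)
    (m ν : ℕ → ℕ) (hm : ∀ k, m (k + 1) = T (ν k))
    (hdom : ∀ᶠ k in Filter.atTop, m k < ν k) :
    {n : ℕ | ¬ (Set.range ν ∩ ↑(I n)).Subsingleton}.Finite := by
  obtain ⟨K, hK⟩ := eventually_atTop.1 hdom
  choose b hb using fun k => hcover (ν k)
  have index_lt_succ : ∀ k, K ≤ k → b k < b (k + 1) := fun k hk => by
    have hlt := hK (k + 1) (by omega)
    rw [hm k, hT (ν k) (b k) (hb k)] at hlt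
    have := le_of_sup_sup_range_lt (N := b k + ν k + 1) (by omega) (hb (k + 1))
    omega
  have hinj : InjOn b (Ici K) :=
    (strictMonoOn_of_lt_succ ordConnected_Ici fun k _ hk _ => by
      simpa only [Order.succ_eq_add_one] using index_lt_succ k hk).injOn
  exact finite_setOf_not_subsingleton_range_inter
    (fun i j hij => Finset.disjoint_coe.2 (hdisj hij)) hb hinj

/-- The core of ONE's winning 1-tactic for a non-rare filter: with
`T k = max (⋃_{j ≤ n+k} I j) + n + k + 1` for `k ∈ I n`, in any play with
`m (k+1) = T (ν k)`, if `m k < ν k` for all but finitely many `k`, then TWO's set of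
moves meets all but finitely many blocks in at most one point. -/
theorem stmt19 (I : ℕ → Finset ℕ) (hne : ∀ n, (I n).Nonempty)
    (hdisj : Pairwise fun i j => Disjoint (I i) (I j))
    (hcover : ∀ k : ℕ, ∃ n, k ∈ I n)
    (T : ℕ → ℕ)
    (hT : ∀ k n : ℕ, k ∈ I n →
      T k = (Finset.range (n + k + 1)).sup (fun j => (I j).sup id) + n + k + 1)
    (m ν : ℕ → ℕ) (hm : ∀ k, m (k + 1) = T (ν k))
    (hdom : ∀ᶠ k in Filter.atTop, m k < ν k) :
    {n : ℕ | ¬ (Set.range ν ∩ ↑(I n)).Subsingleton}.Finite :=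
  stmt19_general I hdisj hcover T hT m ν hm hdom
end
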